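/- Let d ≥ 1, let C_π be a symmetric positive definite d×d real matrix, set Γ := C_π^{-1} + (1/2)I, let C_0 be symmetric positive definite with C_0 − C_π invertible, and let T > 0. Assume that for every γ ∈ [0,T] the matrix e^{Γγ}(C_0 − C_π)^{-1}e^{Γγ} + (e^{γ} − 1)C_π^{-1}e^{2γC_π^{-1}} is invertible. Then P_γ := C_π + ( e^{Γγ}(C_0 − C_π)^{-1}e^{Γγ} + (e^{γ} − 1)C_π^{-1}e^{2γC_π^{-1}} )^{-1} satisfies P_0 = C_0 and, for every γ ∈ [0,T], P is differentiable at γ with dP_γ/dγ = −P_γ C_π^{-1}(I − 2M_γ C_π^{-1})P_γ − (I − (1/2)C_π + 2M_γ)C_π^{-1}P_γ − P_γ C_π^{-1}(I − (1/2)C_π + 2M_γ) + 2(I + M_γ), where M_γ := −(1/2)C_π(e^{2γC_π^{-1}} − I). (This is the covariance of one step of the Fisher–Rao-then-Wasserstein sequential splitting in the multivariate Gaussian case.) -/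

import Mathlib

/-!
With `S = C_π⁻¹` and `E_γ = e^{2γS}`, write `P_γ = C_π + Q_γ⁻¹`. Because `Γ = S + ½` commutes
with `S`, the matrix `Q_γ` solves the linear (Lyapunov) equation `Q' = Γ Q + Q Γ + S E`, hence
`R = Q⁻¹` solves the Riccati equation `R' = -Γ R - R Γ - R S E R`. Since `1 - 2 M S = E`, all
terms without `R` cancel when the right-hand side of the covariance ODE is evaluated at
`P = C_π + R`, and what remains is exactly this Riccati field.
-/

open Matrix Set NormedSpace

attribute [local instance] Matrix.frobeniusNormedRing Matrix.frobeniusNormedAlgebra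

section Riccati

variable {𝕜 𝔸 : Type*} [NontriviallyNormedField 𝕜] [NormedRing 𝔸] [NormedAlgebra 𝕜 𝔸]

theorem HasDerivAt.ringInverse [CompleteSpace 𝔸] {f : 𝕜 → 𝔸} {f' : 𝔸} {x : 𝕜}
    (hf : HasDerivAt f f' x) (hx : IsUnit (f x)) :
    HasDerivAt (fun t => Ring.inverse (f t))
      (-(Ring.inverse (f x) * f' * Ring.inverse (f x))) x := by
  obtain ⟨u, hu⟩ := hx
  have hinv := hasFDerivAt_ringInverse (𝕜 := 𝕜) u
  rw [hu] at hinv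
  simpa [Function.comp_def, ← hu] using hinv.comp_hasDerivAt x hf

theorem HasDerivAt.lyapunov_add {f g : 𝕜 → 𝔸} {Γ B : 𝔸} {x : 𝕜}
    (hf : HasDerivAt f (Γ * f x + f x * Γ) x) (hg : HasDerivAt g (Γ * g x + g x * Γ + B) x) :
    HasDerivAt (fun t => f t + g t) (Γ * (f x + g x) + (f x + g x) * Γ + B) x :=
  (hf.add hg).congr_deriv (by noncomm_ring)

theorem HasDerivAt.ringInverse_of_lyapunov [CompleteSpace 𝔸] {Q : 𝕜 → 𝔸} {Γ B : 𝔸} {x : 𝕜}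
    (hQ : HasDerivAt Q (Γ * Q x + Q x * Γ + B) x) (hx : IsUnit (Q x)) :
    HasDerivAt (fun t => Ring.inverse (Q t))
      (-(Γ * Ring.inverse (Q x)) - Ring.inverse (Q x) * Γ
        - Ring.inverse (Q x) * B * Ring.inverse (Q x)) x := by
  convert hQ.ringInverse hx using 1
  have hl : Ring.inverse (Q x) * Q x = 1 := Ring.inverse_mul_cancel _ hx
  have hr : Q x * Ring.inverse (Q x) = 1 := Ring.mul_inverse_cancel _ hx
  set R := Ring.inverse (Q x)
  calc -(Γ * R) - R * Γ - R * B * R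
      = -(R * Γ * (Q x * R) + R * Q x * (Γ * R) + R * B * R) := by
        rw [hl, hr, mul_one, one_mul]; abel
    _ = -(R * (Γ * Q x + Q x * Γ + B) * R) := by noncomm_ring

end Riccati

theorem hasDerivAt_exp_smul_mul_mul_exp_smul {𝕂 𝔸 : Type*} [RCLike 𝕂] [NormedRing 𝔸]
    [NormedAlgebra 𝕂 𝔸] [CompleteSpace 𝔸] (Γ A : 𝔸) (t : 𝕂) :
    HasDerivAt (fun u : 𝕂 => exp (u • Γ) * A * exp (u • Γ))
      (Γ * (exp (t • Γ) * A * exp (t • Γ)) + exp (t • Γ) * A * exp (t • Γ) * Γ) t := by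
  refine (((hasDerivAt_exp_smul_const' Γ t).mul_const A).mul
    (hasDerivAt_exp_smul_const Γ t)).congr_deriv ?_
  noncomm_ring

theorem hasDerivAt_expm1_smul_mul_exp_two_smul {𝔸 : Type*} [NormedRing 𝔸] [NormedAlgebra ℝ 𝔸]
    [CompleteSpace 𝔸] (S : 𝔸) (t : ℝ) :
    HasDerivAt (fun u : ℝ => (Real.exp u - 1) • (S * exp ((2 * u) • S)))
      ((S + (1 / 2 : ℝ) • 1) * ((Real.exp t - 1) • (S * exp ((2 * t) • S)))
        + (Real.exp t - 1) • (S * exp ((2 * t) • S)) * (S + (1 / 2 : ℝ) • 1)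
        + S * exp ((2 * t) • S)) t := by
  have hE : HasDerivAt (fun u : ℝ => exp ((2 * u) • S))
      (exp ((2 * t) • S) * (2 : ℝ) • S) t := by
    simpa only [smul_smul, mul_comm] using hasDerivAt_exp_smul_const (𝕂 := ℝ) ((2 : ℝ) • S) t
  refine (((Real.hasDerivAt_exp t).sub_const 1).smul (hE.const_mul S)).congr_deriv ?_
  have hSE : Commute S (exp ((2 * t) • S)) := ((Commute.refl S).smul_right (2 * t)).exp_right
  simp only [add_mul, mul_add, smul_mul_assoc, mul_smul_comm, mul_assoc, one_mul, mul_one,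
    hSE.eq, hSE.left_comm]
  module

theorem frw_covariance_rhs_eq {A : Type*} [Ring A] [Algebra ℝ A] {C S E R M P : A}
    (hCS : C * S = 1) (hSC : S * C = 1) (hES : Commute E S) (hEC : Commute E C)
    (hM : M = -((1 / 2 : ℝ) • (C * (E - 1)))) (hP : P = C + R) :
    -(P * S * (1 - (2 : ℝ) • (M * S)) * P)
      - (1 - (1 / 2 : ℝ) • C + (2 : ℝ) • M) * S * P
      - P * S * (1 - (1 / 2 : ℝ) • C + (2 : ℝ) • M)
      + (2 : ℝ) • (1 + M)
    = -((S + (1 / 2 : ℝ) • 1) * R) - R * (S + (1 / 2 : ℝ) • 1) - R * (S * E) * R := by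
  have hCS' : ∀ x : A, C * (S * x) = x := fun x => by rw [← mul_assoc, hCS, one_mul]
  have hSC' : ∀ x : A, S * (C * x) = x := fun x => by rw [← mul_assoc, hSC, one_mul]
  subst hM hP
  simp only [mul_add, add_mul, mul_sub, sub_mul, mul_neg, neg_mul, smul_mul_assoc,
    mul_smul_comm, mul_assoc, mul_one, one_mul, smul_add, smul_sub, smul_neg, smul_smul,
    hCS, hSC, hCS', hSC', hES.eq, hEC.eq]
  module

theorem wfr_split_FRW_covariance_general
    (d : ℕ)
    (Cπ : Matrix (Fin d) (Fin d) ℝ) (hCπ : Cπ.PosDef)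
    (Γ : Matrix (Fin d) (Fin d) ℝ) (hΓ : Γ = Cπ⁻¹ + (1 / 2 : ℝ) • 1)
    (C₀ : Matrix (Fin d) (Fin d) ℝ) (hC₀π : IsUnit (C₀ - Cπ))
    (T : ℝ)
    (hinv : ∀ γ ∈ Icc (0 : ℝ) T,
      IsUnit (NormedSpace.exp (γ • Γ) * (C₀ - Cπ)⁻¹ * NormedSpace.exp (γ • Γ)
        + (Real.exp γ - 1) • (Cπ⁻¹ * NormedSpace.exp ((2 * γ) • Cπ⁻¹))))
    (M : ℝ → Matrix (Fin d) (Fin d) ℝ)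
    (hM : ∀ γ, M γ = -((1 / 2 : ℝ) • (Cπ * (NormedSpace.exp ((2 * γ) • Cπ⁻¹) - 1))))
    (P : ℝ → Matrix (Fin d) (Fin d) ℝ)
    (hP : ∀ γ, P γ = Cπ +
      (NormedSpace.exp (γ • Γ) * (C₀ - Cπ)⁻¹ * NormedSpace.exp (γ • Γ)
        + (Real.exp γ - 1) • (Cπ⁻¹ * NormedSpace.exp ((2 * γ) • Cπ⁻¹)))⁻¹) :
    P 0 = C₀ ∧
      ∀ γ ∈ Icc (0 : ℝ) T,
        HasDerivAt P
          (-(P γ * Cπ⁻¹ * (1 - (2 : ℝ) • (M γ * Cπ⁻¹)) * P γ)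
            - (1 - (1 / 2 : ℝ) • Cπ + (2 : ℝ) • M γ) * Cπ⁻¹ * P γ
            - P γ * Cπ⁻¹ * (1 - (1 / 2 : ℝ) • Cπ + (2 : ℝ) • M γ)
            + (2 : ℝ) • (1 + M γ)) γ := by
  have hdet : IsUnit Cπ.det := (isUnit_iff_isUnit_det _).1 hCπ.isUnit
  have hCS : Cπ * Cπ⁻¹ = 1 := mul_nonsing_inv _ hdet
  have hSC : Cπ⁻¹ * Cπ = 1 := nonsing_inv_mul _ hdet
  refine ⟨?_, fun γ hγ => ?_⟩
  · simp [hP 0, nonsing_inv_nonsing_inv _ ((isUnit_iff_isUnit_det _).1 hC₀π)]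
  subst hΓ
  set Q : ℝ → Matrix (Fin d) (Fin d) ℝ := fun t =>
    exp (t • (Cπ⁻¹ + (1 / 2 : ℝ) • 1)) * (C₀ - Cπ)⁻¹ * exp (t • (Cπ⁻¹ + (1 / 2 : ℝ) • 1))
      + (Real.exp t - 1) • (Cπ⁻¹ * exp ((2 * t) • Cπ⁻¹))
  have hQ' : HasDerivAt Q ((Cπ⁻¹ + (1 / 2 : ℝ) • 1) * Q γ + Q γ * (Cπ⁻¹ + (1 / 2 : ℝ) • 1)
      + Cπ⁻¹ * exp ((2 * γ) • Cπ⁻¹)) γ :=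
    (hasDerivAt_exp_smul_mul_mul_exp_smul _ _ γ).lyapunov_add
      (hasDerivAt_expm1_smul_mul_exp_two_smul _ γ)
  have hPQ : P = fun t => Cπ + Ring.inverse (Q t) :=
    funext fun t => by rw [hP t, nonsing_inv_eq_ringInverse]
  have hES : Commute (exp ((2 * γ) • Cπ⁻¹)) Cπ⁻¹ :=
    (((Commute.refl Cπ⁻¹).smul_right (2 * γ)).exp_right).symm
  have hCπS : Commute Cπ Cπ⁻¹ := hCS.trans hSC.symm
  have hEC : Commute (exp ((2 * γ) • Cπ⁻¹)) Cπ := ((hCπS.smul_right (2 * γ)).exp_right).symm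
  rw [frw_covariance_rhs_eq hCS hSC hES hEC (hM γ) (congrFun hPQ γ), hPQ]
  exact (hQ'.ringInverse_of_lyapunov (hinv γ hγ)).const_add Cπ

/-- Covariance of one step of the Fisher–Rao-then-Wasserstein sequential
splitting in the multivariate Gaussian case solves the perturbed covariance ODE with
perturbation `M_γ = −(1/2) C_π (e^{2γC_π^{-1}} − I)`. -/
theorem wfr_split_FRW_covariance
    (d : ℕ) (hd : 1 ≤ d)
    (Cπ : Matrix (Fin d) (Fin d) ℝ) (hCπ : Cπ.PosDef)
    (Γ : Matrix (Fin d) (Fin d) ℝ) (hΓ : Γ = Cπ⁻¹ + (1 / 2 : ℝ) • 1)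
    (C₀ : Matrix (Fin d) (Fin d) ℝ) (hC₀ : C₀.PosDef) (hC₀π : IsUnit (C₀ - Cπ))
    (T : ℝ) (hT : 0 < T)
    (hinv : ∀ γ ∈ Icc (0 : ℝ) T,
      IsUnit (NormedSpace.exp (γ • Γ) * (C₀ - Cπ)⁻¹ * NormedSpace.exp (γ • Γ)
        + (Real.exp γ - 1) • (Cπ⁻¹ * NormedSpace.exp ((2 * γ) • Cπ⁻¹))))
    (M : ℝ → Matrix (Fin d) (Fin d) ℝ)
    (hM : ∀ γ, M γ = -((1 / 2 : ℝ) • (Cπ * (NormedSpace.exp ((2 * γ) • Cπ⁻¹) - 1))))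
    (P : ℝ → Matrix (Fin d) (Fin d) ℝ)
    (hP : ∀ γ, P γ = Cπ +
      (NormedSpace.exp (γ • Γ) * (C₀ - Cπ)⁻¹ * NormedSpace.exp (γ • Γ)
        + (Real.exp γ - 1) • (Cπ⁻¹ * NormedSpace.exp ((2 * γ) • Cπ⁻¹)))⁻¹) :
    P 0 = C₀ ∧
      ∀ γ ∈ Icc (0 : ℝ) T,
        HasDerivAt P
          (-(P γ * Cπ⁻¹ * (1 - (2 : ℝ) • (M γ * Cπ⁻¹)) * P γ)
            - (1 - (1 / 2 : ℝ) • Cπ + (2 : ℝ) • M γ) * Cπ⁻¹ * P γ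
            - P γ * Cπ⁻¹ * (1 - (1 / 2 : ℝ) • Cπ + (2 : ℝ) • M γ)
            + (2 : ℝ) • (1 + M γ)) γ :=
  wfr_split_FRW_covariance_general d Cπ hCπ Γ hΓ C₀ hC₀π T hinv M hM P hP
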